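/- Let K be a field of characteristic 0 and C a neutral K-linear Tannakian category with fiber functor F : C → Vect_K. Let L/K be a finite Galois extension with group G, and let P be a rank-1 object of C_L with ᵍP ≅ P for all g ∈ G. Then P descends to C. -/

import Mathlib

/-!
Since the endomorphisms of `Φ P` are the scalars `L`, every isomorphism `Φ P ≅ ᵍ(Φ P)` is a
scalar multiple of the image of a chosen isomorphism `P ≅ ᵍP`, hence is itself the image of an
isomorphism `P ≅ ᵍP`. Lifting a descent datum of `Φ P` termwise in this way gives isomorphisms
whose cocycle condition holds after applying the faithful functor `Φ`, hence holds in `C`;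
Galois descent in `C` then descends `P`.
-/

open CategoryTheory CategoryTheory.MonoidalCategory

namespace CategoryTheory

theorem Functor.exists_mapIso_eq_of_surjective_smul_id {R : Type*} [Semiring R] {C D : Type*}
    [Category C] [Category D] [Preadditive C] [Preadditive D]
    [CategoryTheory.Linear R C] [CategoryTheory.Linear R D]
    (Φ : C ⥤ D) [Φ.Additive] [Φ.Linear R] [Φ.Faithful] {X Y : C}
    (hEnd : Function.Surjective (fun a : R => a • 𝟙 (Φ.obj X))) (e : X ≅ Y)
    (d : Φ.obj X ≅ Φ.obj Y) : ∃ e' : X ≅ Y, Φ.mapIso e' = d := by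
  obtain ⟨a, ha⟩ := hEnd (d.hom ≫ Φ.map e.inv)
  obtain ⟨b, hb⟩ := hEnd (Φ.map e.hom ≫ d.inv)
  have hom_eq : Φ.map (a • e.hom) = d.hom := by
    rw [Φ.map_smul, ← Category.id_comp (Φ.map e.hom), ← Linear.smul_comp]
    simp only [ha, Category.assoc, ← Φ.map_comp, Iso.inv_hom_id, Φ.map_id, Category.comp_id]
  have inv_eq : Φ.map (b • e.inv) = d.inv := by
    rw [Φ.map_smul, ← Category.comp_id (Φ.map e.inv), ← Linear.comp_smul]
    simp only [hb, ← Category.assoc, ← Φ.map_comp, Iso.inv_hom_id, Φ.map_id, Category.id_comp]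
  refine ⟨⟨a • e.hom, b • e.inv, ?_, ?_⟩, Iso.ext hom_eq⟩ <;>
    refine Φ.map_injective ?_ <;>
    simp only [Functor.map_comp, hom_eq, inv_eq, Iso.hom_inv_id, Iso.inv_hom_id, Functor.map_id]

section Descent

variable {G : Type*} [Mul G] {C : Type*} [Category C]

def IsDescentDatum (ρ : G → C ⥤ C) (hmul : ∀ g h : G, ρ (g * h) = ρ h ⋙ ρ g) {X : C}
    (φ : ∀ g : G, X ≅ (ρ g).obj X) : Prop :=
  ∀ g h : G, (φ (g * h)).hom = (φ g).hom ≫ (ρ g).map (φ h).hom ≫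
    eqToHom (show (ρ g).obj ((ρ h).obj X) = (ρ (g * h)).obj X by rw [hmul g h]; rfl)

variable {D : Type*} [Category D] {ρC : G → C ⥤ C} {ρD : G → D ⥤ D}
  {hmulC : ∀ g h : G, ρC (g * h) = ρC h ⋙ ρC g} {hmulD : ∀ g h : G, ρD (g * h) = ρD h ⋙ ρD g}

theorem IsDescentDatum.of_map (Φ : C ⥤ D) [Φ.Faithful] (hcomm : ∀ g : G, ρC g ⋙ Φ = Φ ⋙ ρD g)
    {X : C} {φ : ∀ g : G, X ≅ (ρC g).obj X} {ψ : ∀ g : G, Φ.obj X ≅ (ρD g).obj (Φ.obj X)}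
    (hψ : IsDescentDatum ρD hmulD ψ)
    (hφ : ∀ g : G, Φ.map (φ g).hom =
      (ψ g).hom ≫ eqToHom (Functor.congr_obj (hcomm g) X).symm) :
    IsDescentDatum ρC hmulC φ := by
  intro g h
  apply Φ.map_injective
  have hρ : Φ.map ((ρC g).map (φ h).hom) = eqToHom (Functor.congr_obj (hcomm g) X) ≫
      (ρD g).map (Φ.map (φ h).hom) ≫ eqToHom (Functor.congr_obj (hcomm g) _).symm := by
    simpa using Functor.congr_hom (hcomm g) (φ h).hom
  simp only [Φ.map_comp, hρ, hφ, hψ g h, eqToHom_map, Functor.map_comp]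
  simp

end Descent

end CategoryTheory

/-- **Rank-1 objects in a neutral Tannakian category descend.**
Let `K` be a field of characteristic `0`, `C` a neutral `K`-linear Tannakian category
with fiber functor to `Vect_K`, and `L/K` finite Galois with group `G`.  Formalized:
`C` (the base change `C_L`) is an `L`-linear monoidal category with a strict
semilinear `G`-action `ρC`, `Ind : C₀ ⥤ C` is induction and Galois descent holds in
`C`; the base-changed fiber functor is an equivariant `L`-linear functor `Φ : C ⥤ D`
where `D` (playing the role of `Vect_L`) is an `L`-linear category with semilinear
`G`-action in which every object admits a descent datum.  If `P` is a rank-1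
(invertible) object of `C_L` with `ᵍP ≅ P` for all `g ∈ G` (whence `End(P) ≅ L` and
`End(Φ P) ≅ L`), then `P` descends to `C`. -/
theorem rank_one_descends_neutral_tannakian
    (K L : Type*) [Field K] [Field L] [Algebra K L]
    (C D : Type*) [Category C] [Category D] [Preadditive C] [Preadditive D]
    [Linear L C] [Linear L D]
    (ρC : (L ≃ₐ[K] L) → C ⥤ C) (ρD : (L ≃ₐ[K] L) → D ⥤ D)
    (hmulC : ∀ g h : L ≃ₐ[K] L, ρC (g * h) = ρC h ⋙ ρC g)
    (hmulD : ∀ g h : L ≃ₐ[K] L, ρD (g * h) = ρD h ⋙ ρD g)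
    -- the base-changed fiber functor
    (Φ : C ⥤ D) [Φ.Additive] [Φ.Linear L] [Φ.Faithful]
    (hcomm : ∀ g : L ≃ₐ[K] L, ρC g ⋙ Φ = Φ ⋙ ρD g)
    -- every object of `D` (= `Vect_L`) descends
    (hDall : ∀ X : D, ∃ dat : ∀ g : L ≃ₐ[K] L, X ≅ (ρD g).obj X,
      ∀ g h : L ≃ₐ[K] L,
        (dat (g * h)).hom =
          (dat g).hom ≫ (ρD g).map (dat h).hom ≫
            eqToHom (show (ρD g).obj ((ρD h).obj X) = (ρD (g * h)).obj X by
              rw [hmulD g h]; rfl))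
    -- induction and Galois descent for `C`
    (C₀ : Type*) [Category C₀] (Ind : C₀ ⥤ C)
    (hdescC : ∀ X : C,
      (∃ N : C₀, Nonempty (Ind.obj N ≅ X)) ↔
      ∃ dat : ∀ g : L ≃ₐ[K] L, X ≅ (ρC g).obj X,
        ∀ g h : L ≃ₐ[K] L,
          (dat (g * h)).hom =
            (dat g).hom ≫ (ρC g).map (dat h).hom ≫
              eqToHom (show (ρC g).obj ((ρC h).obj X) = (ρC (g * h)).obj X by
                rw [hmulC g h]; rfl))
    -- `P` is a rank-1 (invertible) object, isomorphic to all its twists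
    (P : C)
    (hEndΦP : Function.Bijective (fun a : L => a • (𝟙 (Φ.obj P))))
    (htwist : ∀ g : L ≃ₐ[K] L, Nonempty (P ≅ (ρC g).obj P)) :
    ∃ N : C₀, Nonempty (Ind.obj N ≅ P) := by
  obtain ⟨ψ, hψ⟩ : ∃ ψ, IsDescentDatum ρD hmulD ψ := hDall (Φ.obj P)
  have lift (g) : ∃ φ : P ≅ (ρC g).obj P,
      Φ.mapIso φ = ψ g ≪≫ eqToIso (Functor.congr_obj (hcomm g) P).symm :=
    Φ.exists_mapIso_eq_of_surjective_smul_id hEndΦP.2 (htwist g).some _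
  choose φ hφ_map using lift
  have hφ : IsDescentDatum ρC hmulC φ :=
    hψ.of_map Φ hcomm fun g => congrArg Iso.hom (hφ_map g)
  exact (hdescC P).mpr ⟨φ, hφ⟩
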